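/- Let A be an associative unital ℂ-algebra and let L⁺, L⁻ be 2×2 matrices with entries in A satisfying the three RLL relations R⁺ L⁺₁ L⁺₂ = L⁺₂ L⁺₁ R⁺, R⁺ L⁻₁ L⁻₂ = L⁻₂ L⁻₁ R⁺, R⁺ L⁺₁ L⁻₂ = L⁻₂ L⁺₁ R⁺. Define the evaluation representation L⁺(x) := x⁻¹·L⁺ + L⁻ and L⁻(x) := L⁺ + x·L⁻ for x ∈ ℂ, x ≠ 0. Then for all nonzero x₁, x₂ ∈ ℂ the affine relations hold: W⁺(x₁,x₂) L⁺(x₁)₁ L⁺(x₂)₂ = L⁺(x₂)₂ L⁺(x₁)₁ W⁺(x₁,x₂), W⁺(x₁,x₂) L⁻(x₁)₁ L⁻(x₂)₂ = L⁻(x₂)₂ L⁻(x₁)₁ W⁺(x₁,x₂), and W⁺(x₁,x₂) L⁺(x₁)₁ L⁻(x₂)₂ = L⁻(x₂)₂ L⁺(x₁)₁ W⁺(x₁,x₂). -/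
import Mathlib


noncomputable section

open Matrix Complex

/-- 4×4 complex matrix reindexed by pairs in `Fin 2 × Fin 2` (lexicographic order). -/
def pairMat (A : Matrix (Fin 4) (Fin 4) ℂ) :
    Matrix (Fin 2 × Fin 2) (Fin 2 × Fin 2) ℂ :=
  Matrix.of fun p q =>
    A ⟨2 * p.1.val + p.2.val, by omega⟩ ⟨2 * q.1.val + q.2.val, by omega⟩

/-- The matrix `R⁺ = P R P` of S03. -/
def Rplus : Matrix (Fin 2 × Fin 2) (Fin 2 × Fin 2) ℂ :=
  (Real.sqrt 2 : ℂ)⁻¹ • pairMat !![1,0,0,1; 0,-1,1,0; 0,1,1,0; -1,0,0,1]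

/-- The Baxterisation `W⁺(x,y)` of `R⁺` (rescaled to remove square roots). -/
def Wplus (x y : ℂ) : Matrix (Fin 2 × Fin 2) (Fin 2 × Fin 2) ℂ :=
  pairMat !![x+y, 0, 0, y-x;
             0, x-y, x+y, 0;
             0, x+y, y-x, 0;
             x-y, 0, 0, x+y]

variable {A : Type*} [Ring A] [Algebra ℂ A]

/-- A complex matrix regarded as a matrix over the ℂ-algebra `A`. -/
def cmap (M : Matrix (Fin 2 × Fin 2) (Fin 2 × Fin 2) ℂ) :
    Matrix (Fin 2 × Fin 2) (Fin 2 × Fin 2) A :=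
  M.map (algebraMap ℂ A)

/-- `L₁ = L ⊗ 1` : Kronecker product with the 2×2 identity in the second slot. -/
def amp1 (L : Matrix (Fin 2) (Fin 2) A) :
    Matrix (Fin 2 × Fin 2) (Fin 2 × Fin 2) A :=
  Matrix.of fun p q => if p.2 = q.2 then L p.1 q.1 else 0

/-- `L₂ = 1 ⊗ L` : Kronecker product with the 2×2 identity in the first slot. -/
def amp2 (L : Matrix (Fin 2) (Fin 2) A) :
    Matrix (Fin 2 × Fin 2) (Fin 2 × Fin 2) A :=
  Matrix.of fun p q => if p.1 = q.1 then L p.2 q.2 else 0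

/-- The unscaled matrix `√2 · R⁺`. -/
def M0aux : Matrix (Fin 2 × Fin 2) (Fin 2 × Fin 2) ℂ :=
  pairMat !![1,0,0,1; 0,-1,1,0; 0,1,1,0; -1,0,0,1]

lemma amp1_smul_aux (c : ℂ) (L : Matrix (Fin 2) (Fin 2) A) :
    amp1 (c • L) = c • amp1 L := by
  ext p q
  simp [amp1, apply_ite (c • ·)]

lemma amp2_smul_aux (c : ℂ) (L : Matrix (Fin 2) (Fin 2) A) :
    amp2 (c • L) = c • amp2 L := by
  ext p q
  simp [amp2, apply_ite (c • ·)]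

set_option maxHeartbeats 4000000 in
lemma keyW_aux (Lp Lm : Matrix (Fin 2) (Fin 2) A)
    (h1 : cmap (A := A) M0aux * amp1 Lp * amp2 Lp = amp2 Lp * amp1 Lp * cmap M0aux)
    (h2 : cmap (A := A) M0aux * amp1 Lm * amp2 Lm = amp2 Lm * amp1 Lm * cmap M0aux)
    (h3 : cmap (A := A) M0aux * amp1 Lp * amp2 Lm = amp2 Lm * amp1 Lp * cmap M0aux)
    (x₁ x₂ : ℂ) :
    cmap (A := A) (Wplus x₁ x₂) * amp1 (Lp + x₁ • Lm) * amp2 (Lp + x₂ • Lm) =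
      amp2 (Lp + x₂ • Lm) * amp1 (Lp + x₁ • Lm) * cmap (Wplus x₁ x₂) := by
  have E1 := fun p q => (Matrix.ext_iff (M := cmap (A := A) M0aux * amp1 Lp * amp2 Lp)).2 h1 p q
  have E2 := fun p q => (Matrix.ext_iff (M := cmap (A := A) M0aux * amp1 Lm * amp2 Lm)).2 h2 p q
  have E3 := fun p q => (Matrix.ext_iff (M := cmap (A := A) M0aux * amp1 Lp * amp2 Lm)).2 h3 p q
  have E1_0_0 := E1 ((0:Fin 2),(0:Fin 2)) ((0:Fin 2),(0:Fin 2))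
  have E1_0_1 := E1 ((0:Fin 2),(0:Fin 2)) ((0:Fin 2),(1:Fin 2))
  have E1_0_2 := E1 ((0:Fin 2),(0:Fin 2)) ((1:Fin 2),(0:Fin 2))
  have E1_0_3 := E1 ((0:Fin 2),(0:Fin 2)) ((1:Fin 2),(1:Fin 2))
  have E1_1_0 := E1 ((0:Fin 2),(1:Fin 2)) ((0:Fin 2),(0:Fin 2))
  have E1_1_1 := E1 ((0:Fin 2),(1:Fin 2)) ((0:Fin 2),(1:Fin 2))
  have E1_1_2 := E1 ((0:Fin 2),(1:Fin 2)) ((1:Fin 2),(0:Fin 2))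
  have E1_1_3 := E1 ((0:Fin 2),(1:Fin 2)) ((1:Fin 2),(1:Fin 2))
  have E2_0_0 := E2 ((0:Fin 2),(0:Fin 2)) ((0:Fin 2),(0:Fin 2))
  have E2_0_1 := E2 ((0:Fin 2),(0:Fin 2)) ((0:Fin 2),(1:Fin 2))
  have E2_0_2 := E2 ((0:Fin 2),(0:Fin 2)) ((1:Fin 2),(0:Fin 2))
  have E2_0_3 := E2 ((0:Fin 2),(0:Fin 2)) ((1:Fin 2),(1:Fin 2))
  have E2_1_0 := E2 ((0:Fin 2),(1:Fin 2)) ((0:Fin 2),(0:Fin 2))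
  have E2_1_1 := E2 ((0:Fin 2),(1:Fin 2)) ((0:Fin 2),(1:Fin 2))
  have E2_1_2 := E2 ((0:Fin 2),(1:Fin 2)) ((1:Fin 2),(0:Fin 2))
  have E2_1_3 := E2 ((0:Fin 2),(1:Fin 2)) ((1:Fin 2),(1:Fin 2))
  have E3_0_0 := E3 ((0:Fin 2),(0:Fin 2)) ((0:Fin 2),(0:Fin 2))
  have E3_0_1 := E3 ((0:Fin 2),(0:Fin 2)) ((0:Fin 2),(1:Fin 2))
  have E3_0_2 := E3 ((0:Fin 2),(0:Fin 2)) ((1:Fin 2),(0:Fin 2))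
  have E3_0_3 := E3 ((0:Fin 2),(0:Fin 2)) ((1:Fin 2),(1:Fin 2))
  have E3_1_0 := E3 ((0:Fin 2),(1:Fin 2)) ((0:Fin 2),(0:Fin 2))
  have E3_1_1 := E3 ((0:Fin 2),(1:Fin 2)) ((0:Fin 2),(1:Fin 2))
  have E3_1_2 := E3 ((0:Fin 2),(1:Fin 2)) ((1:Fin 2),(0:Fin 2))
  have E3_1_3 := E3 ((0:Fin 2),(1:Fin 2)) ((1:Fin 2),(1:Fin 2))
  have E3_2_0 := E3 ((1:Fin 2),(0:Fin 2)) ((0:Fin 2),(0:Fin 2))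
  have E3_2_1 := E3 ((1:Fin 2),(0:Fin 2)) ((0:Fin 2),(1:Fin 2))
  have E3_2_2 := E3 ((1:Fin 2),(0:Fin 2)) ((1:Fin 2),(0:Fin 2))
  have E3_2_3 := E3 ((1:Fin 2),(0:Fin 2)) ((1:Fin 2),(1:Fin 2))
  have E3_3_0 := E3 ((1:Fin 2),(1:Fin 2)) ((0:Fin 2),(0:Fin 2))
  have E3_3_1 := E3 ((1:Fin 2),(1:Fin 2)) ((0:Fin 2),(1:Fin 2))
  have E3_3_2 := E3 ((1:Fin 2),(1:Fin 2)) ((1:Fin 2),(0:Fin 2))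
  have E3_3_3 := E3 ((1:Fin 2),(1:Fin 2)) ((1:Fin 2),(1:Fin 2))
  simp [cmap, M0aux, Wplus, pairMat, amp1, amp2, Matrix.mul_apply,
    Fintype.sum_prod_type, Fin.sum_univ_two,
    Algebra.algebraMap_eq_smul_one, smul_mul_assoc, add_mul, mul_add, smul_smul,
    smul_add, mul_smul_comm, sub_smul, add_smul] at E1_0_0 E1_0_1 E1_0_2 E1_0_3 E1_1_0 E1_1_1 E1_1_2 E1_1_3 E2_0_0 E2_0_1 E2_0_2 E2_0_3 E2_1_0 E2_1_1 E2_1_2 E2_1_3 E3_0_0 E3_0_1 E3_0_2 E3_0_3 E3_1_0 E3_1_1 E3_1_2 E3_1_3 E3_2_0 E3_2_1 E3_2_2 E3_2_3 E3_3_0 E3_3_1 E3_3_2 E3_3_3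
  ext ⟨p1, p2⟩ ⟨q1, q2⟩
  fin_cases p1 <;> fin_cases p2 <;> fin_cases q1 <;> fin_cases q2 <;>
    simp [cmap, M0aux, Wplus, pairMat, amp1, amp2, Matrix.mul_apply,
      Fintype.sum_prod_type, Fin.sum_univ_two,
      Algebra.algebraMap_eq_smul_one, smul_mul_assoc, add_mul, mul_add, smul_smul,
      smul_add, mul_smul_comm, sub_smul, add_smul]
  · linear_combination (norm := module) ((x₂-x₁ : ℂ)) • E1_0_0 +
      ((x₁*x₂^2-x₁^2*x₂ : ℂ)) • E2_0_0 +
      ((x₂^2+(-1/2)*x₁*x₂+(-1/2)*x₁^2 : ℂ)) • E3_0_0 +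
      (((1/2)*x₁*x₂+(-1/2)*x₁^2 : ℂ)) • E3_0_3 +
      (((-1/2)*x₁*x₂+(1/2)*x₁^2 : ℂ)) • E3_3_0 +
      (((-1/2)*x₁*x₂+(1/2)*x₁^2 : ℂ)) • E3_3_3
  · linear_combination (norm := module) ((x₂-x₁ : ℂ)) • E1_0_1 +
      ((x₁*x₂^2-x₁^2*x₂ : ℂ)) • E2_0_1 +
      ((x₂^2+(-1/2)*x₁*x₂+(-1/2)*x₁^2 : ℂ)) • E3_0_1 +
      (((1/2)*x₁*x₂+(-1/2)*x₁^2 : ℂ)) • E3_0_2 +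
      (((-1/2)*x₁*x₂+(1/2)*x₁^2 : ℂ)) • E3_3_1 +
      (((-1/2)*x₁*x₂+(1/2)*x₁^2 : ℂ)) • E3_3_2
  · linear_combination (norm := module) ((x₂-x₁ : ℂ)) • E1_0_2 +
      ((x₁*x₂^2-x₁^2*x₂ : ℂ)) • E2_0_2 +
      (((-1/2)*x₁*x₂+(1/2)*x₁^2 : ℂ)) • E3_0_1 +
      ((x₂^2+(-1/2)*x₁*x₂+(-1/2)*x₁^2 : ℂ)) • E3_0_2 +
      (((1/2)*x₁*x₂+(-1/2)*x₁^2 : ℂ)) • E3_3_1 +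
      (((-1/2)*x₁*x₂+(1/2)*x₁^2 : ℂ)) • E3_3_2
  · linear_combination (norm := module) ((x₂-x₁ : ℂ)) • E1_0_3 +
      ((x₁*x₂^2-x₁^2*x₂ : ℂ)) • E2_0_3 +
      (((-1/2)*x₁*x₂+(1/2)*x₁^2 : ℂ)) • E3_0_0 +
      ((x₂^2+(-1/2)*x₁*x₂+(-1/2)*x₁^2 : ℂ)) • E3_0_3 +
      (((1/2)*x₁*x₂+(-1/2)*x₁^2 : ℂ)) • E3_3_0 +
      (((-1/2)*x₁*x₂+(1/2)*x₁^2 : ℂ)) • E3_3_3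
  · linear_combination (norm := module) ((x₁-x₂ : ℂ)) • E1_1_0 +
      ((x₁^2*x₂-x₁*x₂^2 : ℂ)) • E2_1_0 +
      ((x₂^2+(-1/2)*x₁*x₂+(-1/2)*x₁^2 : ℂ)) • E3_1_0 +
      (((1/2)*x₁*x₂+(-1/2)*x₁^2 : ℂ)) • E3_1_3 +
      (((1/2)*x₁*x₂+(-1/2)*x₁^2 : ℂ)) • E3_2_0 +
      (((1/2)*x₁*x₂+(-1/2)*x₁^2 : ℂ)) • E3_2_3
  · linear_combination (norm := module) ((x₂-x₁ : ℂ)) • E1_1_1 +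
      ((x₁*x₂^2-x₁^2*x₂ : ℂ)) • E2_1_1 +
      ((x₂^2+(-1/2)*x₁*x₂+(-1/2)*x₁^2 : ℂ)) • E3_1_1 +
      (((1/2)*x₁*x₂+(-1/2)*x₁^2 : ℂ)) • E3_1_2 +
      (((1/2)*x₁*x₂+(-1/2)*x₁^2 : ℂ)) • E3_2_1 +
      (((1/2)*x₁*x₂+(-1/2)*x₁^2 : ℂ)) • E3_2_2
  · linear_combination (norm := module) ((x₂-x₁ : ℂ)) • E1_1_2 +
      ((x₁*x₂^2-x₁^2*x₂ : ℂ)) • E2_1_2 +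
      (((-1/2)*x₁*x₂+(1/2)*x₁^2 : ℂ)) • E3_1_1 +
      ((x₂^2+(-1/2)*x₁*x₂+(-1/2)*x₁^2 : ℂ)) • E3_1_2 +
      (((-1/2)*x₁*x₂+(1/2)*x₁^2 : ℂ)) • E3_2_1 +
      (((1/2)*x₁*x₂+(-1/2)*x₁^2 : ℂ)) • E3_2_2
  · linear_combination (norm := module) ((x₂-x₁ : ℂ)) • E1_1_3 +
      ((x₁*x₂^2-x₁^2*x₂ : ℂ)) • E2_1_3 +
      (((-1/2)*x₁*x₂+(1/2)*x₁^2 : ℂ)) • E3_1_0 +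
      ((x₂^2+(-1/2)*x₁*x₂+(-1/2)*x₁^2 : ℂ)) • E3_1_3 +
      (((-1/2)*x₁*x₂+(1/2)*x₁^2 : ℂ)) • E3_2_0 +
      (((1/2)*x₁*x₂+(-1/2)*x₁^2 : ℂ)) • E3_2_3
  · linear_combination (norm := module) ((-x₂+x₁ : ℂ)) • E1_1_3 +
      ((-x₁*x₂^2+x₁^2*x₂ : ℂ)) • E2_1_3 +
      (((-1/2)*x₁*x₂+(1/2)*x₁^2 : ℂ)) • E3_1_0 +
      (((-1/2)*x₁*x₂+(1/2)*x₁^2 : ℂ)) • E3_1_3 +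
      ((x₂^2+(-1/2)*x₁*x₂+(-1/2)*x₁^2 : ℂ)) • E3_2_0 +
      (((1/2)*x₁*x₂+(-1/2)*x₁^2 : ℂ)) • E3_2_3
  · linear_combination (norm := module) ((-x₂+x₁ : ℂ)) • E1_1_2 +
      ((-x₁*x₂^2+x₁^2*x₂ : ℂ)) • E2_1_2 +
      (((-1/2)*x₁*x₂+(1/2)*x₁^2 : ℂ)) • E3_1_1 +
      (((-1/2)*x₁*x₂+(1/2)*x₁^2 : ℂ)) • E3_1_2 +
      ((x₂^2+(-1/2)*x₁*x₂+(-1/2)*x₁^2 : ℂ)) • E3_2_1 +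
      (((1/2)*x₁*x₂+(-1/2)*x₁^2 : ℂ)) • E3_2_2
  · linear_combination (norm := module) ((x₂-x₁ : ℂ)) • E1_1_1 +
      ((x₁*x₂^2-x₁^2*x₂ : ℂ)) • E2_1_1 +
      (((1/2)*x₁*x₂+(-1/2)*x₁^2 : ℂ)) • E3_1_1 +
      (((-1/2)*x₁*x₂+(1/2)*x₁^2 : ℂ)) • E3_1_2 +
      (((-1/2)*x₁*x₂+(1/2)*x₁^2 : ℂ)) • E3_2_1 +
      ((x₂^2+(-1/2)*x₁*x₂+(-1/2)*x₁^2 : ℂ)) • E3_2_2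
  · linear_combination (norm := module) ((x₁-x₂ : ℂ)) • E1_1_0 +
      ((x₁^2*x₂-x₁*x₂^2 : ℂ)) • E2_1_0 +
      (((1/2)*x₁*x₂+(-1/2)*x₁^2 : ℂ)) • E3_1_0 +
      (((-1/2)*x₁*x₂+(1/2)*x₁^2 : ℂ)) • E3_1_3 +
      (((-1/2)*x₁*x₂+(1/2)*x₁^2 : ℂ)) • E3_2_0 +
      ((x₂^2+(-1/2)*x₁*x₂+(-1/2)*x₁^2 : ℂ)) • E3_2_3
  · linear_combination (norm := module) ((x₂-x₁ : ℂ)) • E1_0_3 +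
      ((x₁*x₂^2-x₁^2*x₂ : ℂ)) • E2_0_3 +
      (((1/2)*x₁*x₂+(-1/2)*x₁^2 : ℂ)) • E3_0_0 +
      (((1/2)*x₁*x₂+(-1/2)*x₁^2 : ℂ)) • E3_0_3 +
      ((x₂^2+(-1/2)*x₁*x₂+(-1/2)*x₁^2 : ℂ)) • E3_3_0 +
      (((1/2)*x₁*x₂+(-1/2)*x₁^2 : ℂ)) • E3_3_3
  · linear_combination (norm := module) ((x₂-x₁ : ℂ)) • E1_0_2 +
      ((x₁*x₂^2-x₁^2*x₂ : ℂ)) • E2_0_2 +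
      (((1/2)*x₁*x₂+(-1/2)*x₁^2 : ℂ)) • E3_0_1 +
      (((1/2)*x₁*x₂+(-1/2)*x₁^2 : ℂ)) • E3_0_2 +
      ((x₂^2+(-1/2)*x₁*x₂+(-1/2)*x₁^2 : ℂ)) • E3_3_1 +
      (((1/2)*x₁*x₂+(-1/2)*x₁^2 : ℂ)) • E3_3_2
  · linear_combination (norm := module) ((-x₂+x₁ : ℂ)) • E1_0_1 +
      ((-x₁*x₂^2+x₁^2*x₂ : ℂ)) • E2_0_1 +
      (((-1/2)*x₁*x₂+(1/2)*x₁^2 : ℂ)) • E3_0_1 +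
      (((1/2)*x₁*x₂+(-1/2)*x₁^2 : ℂ)) • E3_0_2 +
      (((-1/2)*x₁*x₂+(1/2)*x₁^2 : ℂ)) • E3_3_1 +
      ((x₂^2+(-1/2)*x₁*x₂+(-1/2)*x₁^2 : ℂ)) • E3_3_2
  · linear_combination (norm := module) ((-x₂+x₁ : ℂ)) • E1_0_0 +
      ((-x₁*x₂^2+x₁^2*x₂ : ℂ)) • E2_0_0 +
      (((-1/2)*x₁*x₂+(1/2)*x₁^2 : ℂ)) • E3_0_0 +
      (((1/2)*x₁*x₂+(-1/2)*x₁^2 : ℂ)) • E3_0_3 +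
      (((-1/2)*x₁*x₂+(1/2)*x₁^2 : ℂ)) • E3_3_0 +
      ((x₂^2+(-1/2)*x₁*x₂+(-1/2)*x₁^2 : ℂ)) • E3_3_3

lemma cmap_Rplus_aux :
    cmap (A := A) Rplus = (Real.sqrt 2 : ℂ)⁻¹ • cmap (A := A) M0aux := by
  ext p q
  simp only [Rplus, M0aux, cmap, Matrix.map_apply, Matrix.smul_apply, smul_eq_mul,
    _root_.map_mul]
  rw [Algebra.smul_def]

/-- If `L⁺, L⁻` satisfy the three RLL relations, then the evaluation representation
`L⁺(x) = x⁻¹·L⁺ + L⁻`, `L⁻(x) = L⁺ + x·L⁻` satisfies the affine RLL relations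
with the Baxterised matrix `W⁺(x₁,x₂)`. -/
theorem evaluation_representation_affine
    (Lp Lm : Matrix (Fin 2) (Fin 2) A)
    (h1 : cmap (A := A) Rplus * amp1 Lp * amp2 Lp = amp2 Lp * amp1 Lp * cmap Rplus)
    (h2 : cmap (A := A) Rplus * amp1 Lm * amp2 Lm = amp2 Lm * amp1 Lm * cmap Rplus)
    (h3 : cmap (A := A) Rplus * amp1 Lp * amp2 Lm = amp2 Lm * amp1 Lp * cmap Rplus) :
    ∀ x₁ x₂ : ℂ, x₁ ≠ 0 → x₂ ≠ 0 →
      (cmap (A := A) (Wplus x₁ x₂) * amp1 (x₁⁻¹ • Lp + Lm) * amp2 (x₂⁻¹ • Lp + Lm) =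
        amp2 (x₂⁻¹ • Lp + Lm) * amp1 (x₁⁻¹ • Lp + Lm) * cmap (Wplus x₁ x₂)) ∧
      (cmap (A := A) (Wplus x₁ x₂) * amp1 (Lp + x₁ • Lm) * amp2 (Lp + x₂ • Lm) =
        amp2 (Lp + x₂ • Lm) * amp1 (Lp + x₁ • Lm) * cmap (Wplus x₁ x₂)) ∧
      (cmap (A := A) (Wplus x₁ x₂) * amp1 (x₁⁻¹ • Lp + Lm) * amp2 (Lp + x₂ • Lm) =
        amp2 (Lp + x₂ • Lm) * amp1 (x₁⁻¹ • Lp + Lm) * cmap (Wplus x₁ x₂)) := by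
  intro x₁ x₂ hx1 hx2
  have hs : ((Real.sqrt 2 : ℝ) : ℂ)⁻¹ ≠ 0 := by
    have h2 : Real.sqrt 2 ≠ 0 := by positivity
    exact inv_ne_zero (Complex.ofReal_ne_zero.2 h2)
  have cancel : ∀ X Y : Matrix (Fin 2 × Fin 2) (Fin 2 × Fin 2) A,
      (Real.sqrt 2 : ℂ)⁻¹ • X = (Real.sqrt 2 : ℂ)⁻¹ • Y → X = Y := by
    intro X Y h
    have := congrArg (fun Z => ((Real.sqrt 2 : ℂ)⁻¹)⁻¹ • Z) h
    simpa [inv_smul_smul₀ hs] using this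
  rw [cmap_Rplus_aux] at h1 h2 h3
  simp only [smul_mul_assoc, mul_smul_comm] at h1 h2 h3
  have h1' := cancel _ _ h1
  have h2' := cancel _ _ h2
  have h3' := cancel _ _ h3
  have key := keyW_aux Lp Lm h1' h2' h3' x₁ x₂
  have e1 : (x₁⁻¹ • Lp + Lm : Matrix (Fin 2) (Fin 2) A) = x₁⁻¹ • (Lp + x₁ • Lm) := by
    rw [smul_add, smul_smul, inv_mul_cancel₀ hx1, one_smul]
  have e2 : (x₂⁻¹ • Lp + Lm : Matrix (Fin 2) (Fin 2) A) = x₂⁻¹ • (Lp + x₂ • Lm) := by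
    rw [smul_add, smul_smul, inv_mul_cancel₀ hx2, one_smul]
  refine ⟨?_, key, ?_⟩
  · rw [e1, e2, amp1_smul_aux, amp2_smul_aux]
    simp only [smul_mul_assoc, mul_smul_comm]
    linear_combination (norm := module) (x₁⁻¹ * x₂⁻¹ : ℂ) • key
  · rw [e1, amp1_smul_aux]
    simp only [smul_mul_assoc, mul_smul_comm]
    linear_combination (norm := module) (x₁⁻¹ : ℂ) • key
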